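/- Let p>2 and let φ be an analytic self-map of the unit disk. Suppose that almost every point w in some neighborhood of the origin has exactly one preimage under φ (i.e., there exists r>0 such that for almost every w with |w|<r, the set {z ∈ 𝔻 : φ(z)=w} is a singleton). Then the composition operator C_φ is an isometry on the analytic Besov space B_p if and only if φ is a rotation of the disk, i.e., φ(z) = λz for some λ ∈ ℂ with |λ| = 1. -/

import Mathlib

open MeasureTheory

/-- The open unit disk in the complex plane. -/
noncomputable def unitDisk : Set ℂ := Metric.ball (0 : ℂ) 1

/-- Lebesgue area measure on ℂ normalized so that the unit disk has measure 1,
i.e., (1/π) times two-dimensional Lebesgue measure. -/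
noncomputable def dA : Measure ℂ := (ENNReal.ofReal Real.pi)⁻¹ • (volume : Measure ℂ)

/-- φ is an analytic self-map of the unit disk. -/
def IsAnalyticSelfMap (φ : ℂ → ℂ) : Prop :=
  DifferentiableOn ℂ φ unitDisk ∧ Set.MapsTo φ unitDisk unitDisk

/-- The Besov integrand ‖f'(z)‖^p (1-|z|²)^{p-2}. -/
noncomputable def besovIntegrand (p : ℝ) (f : ℂ → ℂ) (z : ℂ) : ℝ :=
  ‖deriv f z‖ ^ p * (1 - ‖z‖ ^ 2) ^ (p - 2)

/-- Membership in the analytic Besov space B_p: f is analytic on 𝔻 and the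
Besov integral is finite (expressed as integrability of the nonnegative integrand). -/
def MemBesov (p : ℝ) (f : ℂ → ℂ) : Prop :=
  DifferentiableOn ℂ f unitDisk ∧ IntegrableOn (besovIntegrand p f) unitDisk dA

/-- The Besov semi-norm ‖f‖_p = (∫_𝔻 |f'|^p (1-|z|²)^{p-2} dA)^{1/p}. -/
noncomputable def besovSemi (p : ℝ) (f : ℂ → ℂ) : ℝ :=
  (∫ z in unitDisk, besovIntegrand p f z ∂dA) ^ (1 / p)

/-- The Besov norm ‖f‖_{B_p} = |f(0)| + ‖f‖_p. -/
noncomputable def besovNorm (p : ℝ) (f : ℂ → ℂ) : ℝ := ‖f 0‖ + besovSemi p f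

/-- The composition operator C_φ is an isometry on B_p. -/
def IsBesovIsometry (p : ℝ) (φ : ℂ → ℂ) : Prop :=
  ∀ f : ℂ → ℂ, MemBesov p f → MemBesov p (f ∘ φ) ∧ besovNorm p (f ∘ φ) = besovNorm p f

/-- φ is a rotation of the disk: φ(z) = λ z for a unimodular constant λ. -/
def IsRotation (φ : ℂ → ℂ) : Prop :=
  ∃ lam : ℂ, ‖lam‖ = 1 ∧ ∀ z ∈ unitDisk, φ z = lam * z

/-!
Rotations preserve the Besov integral by a change of variables. Conversely, testing the isometry on
`z - φ 0` gives `φ 0 = 0`, and testing it on `z ^ (n + 1) / (n + 1)` shows that `‖φ‖ ^ p`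
against `|φ'| ^ p (1 - |z|²) ^ (p - 2) dA` has the same moments as `‖z‖ ^ p` against
`(1 - |z|²) ^ (p - 2) dA`, hence, by Weierstrass approximation, the same integrals of every
continuous `g`. The preimage
hypothesis and the open mapping theorem make `φ` injective on `U = 𝔻 ∩ φ⁻¹(B(0, r))`. Taking `g`
positive on `[0, r ^ p)` and zero beyond, the Schwarz–Pick inequality
`|φ'(z)| (1 - |z|²) ≤ 1 - |φ z|²` and the change of variables `w = φ z` on `U` squeeze the two
integrals, which forces equality in Schwarz–Pick wherever `φ' ≠ 0` on `U`. Since `φ' ≠ 0` at points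
arbitrarily close to `0`, this gives `|φ'(0)| = 1`, and the equality case of the Schwarz lemma
makes `φ` a rotation.
-/

open Metric Set Complex Filter Topology ComplexConjugate

lemma mem_unitDisk {z : ℂ} : z ∈ unitDisk ↔ ‖z‖ < 1 := mem_ball_zero_iff

lemma isOpen_unitDisk : IsOpen unitDisk := isOpen_ball

lemma measurableSet_unitDisk : MeasurableSet unitDisk := measurableSet_ball

lemma zero_mem_unitDisk : (0 : ℂ) ∈ unitDisk := mem_unitDisk.mpr (by simp)

lemma one_sub_norm_sq_pos {z : ℂ} (hz : z ∈ unitDisk) : 0 < 1 - ‖z‖ ^ 2 := by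
  have := mem_unitDisk.mp hz
  nlinarith [norm_nonneg z]

lemma norm_rpow_mem_Icc {p : ℝ} (hp : 0 ≤ p) {z : ℂ} (hz : z ∈ unitDisk) :
    ‖z‖ ^ p ∈ Icc (0 : ℝ) 1 :=
  ⟨by positivity, Real.rpow_le_one (norm_nonneg _) (mem_unitDisk.mp hz).le hp⟩

noncomputable def blaschkeFactor (v z : ℂ) : ℂ := (z - v) / (1 - conj v * z)

section Blaschke

variable {v z : ℂ}

lemma one_sub_conj_mul_ne_zero (hv : ‖v‖ < 1) (hz : ‖z‖ < 1) : 1 - conj v * z ≠ 0 := by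
  have : ‖conj v * z‖ < 1 := by
    rw [norm_mul, RCLike.norm_conj]
    exact mul_lt_one_of_nonneg_of_lt_one_left (norm_nonneg _) hv hz.le
  exact sub_ne_zero.mpr fun h => by rw [← h, norm_one] at this; exact lt_irrefl _ this

lemma norm_blaschkeFactor_lt_one (hv : ‖v‖ < 1) (hz : ‖z‖ < 1) : ‖blaschkeFactor v z‖ < 1 := by
  have hd := one_sub_conj_mul_ne_zero hv hz
  rw [blaschkeFactor, norm_div, div_lt_one (norm_pos_iff.mpr hd)]
  have hv2 : normSq v < 1 := by rw [normSq_eq_norm_sq]; nlinarith [norm_nonneg v]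
  have hz2 : normSq z < 1 := by rw [normSq_eq_norm_sq]; nlinarith [norm_nonneg z]
  have key : normSq (1 - conj v * z) - normSq (z - v) = (1 - normSq v) * (1 - normSq z) := by
    simp only [normSq_apply, sub_re, sub_im, mul_re, mul_im, conj_re, conj_im, one_re, one_im]
    ring
  rw [← sq_lt_sq₀ (norm_nonneg _) (norm_nonneg _), ← normSq_eq_norm_sq, ← normSq_eq_norm_sq]
  nlinarith

lemma hasDerivAt_blaschkeFactor (hv : ‖v‖ < 1) (hz : ‖z‖ < 1) :
    HasDerivAt (blaschkeFactor v) ((1 - normSq v) / (1 - conj v * z) ^ 2) z := by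
  have hden : HasDerivAt (fun z => 1 - conj v * z) (-conj v) z := by
    simpa using ((hasDerivAt_id z).const_mul (conj v)).const_sub 1
  refine (((hasDerivAt_id z).sub_const v).div hden (one_sub_conj_mul_ne_zero hv hz)).congr_deriv ?_
  rw [normSq_eq_conj_mul_self]
  simp only [id]
  ring

lemma mapsTo_blaschkeFactor (hv : ‖v‖ < 1) : MapsTo (blaschkeFactor v) unitDisk unitDisk :=
  fun _ hz => mem_unitDisk.mpr (norm_blaschkeFactor_lt_one hv (mem_unitDisk.mp hz))

lemma differentiableOn_blaschkeFactor (hv : ‖v‖ < 1) :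
    DifferentiableOn ℂ (blaschkeFactor v) unitDisk := fun _ hz =>
  (hasDerivAt_blaschkeFactor hv (mem_unitDisk.mp hz)).differentiableAt.differentiableWithinAt

end Blaschke

/-- Schwarz–Pick: the Schwarz lemma for `φ` conjugated by disk automorphisms. -/
theorem norm_deriv_mul_le_of_mapsTo_unitDisk {φ : ℂ → ℂ} (hd : DifferentiableOn ℂ φ unitDisk)
    (hm : MapsTo φ unitDisk unitDisk) {z : ℂ} (hz : z ∈ unitDisk) :
    ‖deriv φ z‖ * (1 - ‖z‖ ^ 2) ≤ 1 - ‖φ z‖ ^ 2 := by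
  have hz1 : ‖z‖ < 1 := mem_unitDisk.mp hz
  have hw1 : ‖φ z‖ < 1 := mem_unitDisk.mp (hm hz)
  have hnz : ‖-z‖ < 1 := by rwa [norm_neg]
  have hB0 : blaschkeFactor (-z) 0 = z := by simp [blaschkeFactor]
  set F := blaschkeFactor (φ z) ∘ φ ∘ blaschkeFactor (-z)
  have hFd : DifferentiableOn ℂ F unitDisk :=
    (differentiableOn_blaschkeFactor hw1).comp
      (hd.comp (differentiableOn_blaschkeFactor hnz) (mapsTo_blaschkeFactor hnz))
      (hm.comp (mapsTo_blaschkeFactor hnz))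
  have hFm : MapsTo F (ball 0 1) (closedBall (F 0) 1) := by
    have hF0 : F 0 = 0 := by simp [F, blaschkeFactor]
    rw [hF0]
    exact ((mapsTo_blaschkeFactor hw1).comp (hm.comp (mapsTo_blaschkeFactor hnz))).mono_right
      ball_subset_closedBall
  have hz2 := one_sub_norm_sq_pos hz
  have hw2 := one_sub_norm_sq_pos (hm hz)
  have hF' : HasDerivAt F (deriv φ z * ((1 - ‖z‖ ^ 2) / (1 - ‖φ z‖ ^ 2) : ℝ)) 0 := by
    have hφ' : HasDerivAt φ (deriv φ z) (blaschkeFactor (-z) 0) := by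
      rw [hB0]; exact (hd.differentiableAt (isOpen_unitDisk.mem_nhds hz)).hasDerivAt
    -- `blaschkeFactor w` has derivative `(1 - ‖w‖²)⁻¹` at `w`, `blaschkeFactor (-z)` has
    -- derivative `1 - ‖z‖²` at `0`
    refine ((hasDerivAt_blaschkeFactor hw1 hw1).comp_of_eq 0
      (hφ'.comp 0 (hasDerivAt_blaschkeFactor hnz (by simp))) (by simp [hB0])).congr_deriv ?_
    have hne : (1 : ℂ) - conj (φ z) * φ z ≠ 0 := one_sub_conj_mul_ne_zero hw1 hw1
    rw [Complex.conj_mul'] at hne ⊢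
    push_cast
    field_simp
    simp only [normSq_eq_norm_sq, norm_neg, mul_zero, sub_zero]
    push_cast
    ring
  have hSchwarz := norm_deriv_le_one_of_mapsTo_ball hFd hFm one_pos
  rw [hF'.deriv, norm_mul, norm_real, Real.norm_of_nonneg (div_pos hz2 hw2).le, mul_div_assoc',
    div_le_one hw2] at hSchwarz
  exact hSchwarz

instance isAddHaarMeasure_dA : dA.IsAddHaarMeasure :=
  .smul _ (ENNReal.inv_ne_zero.mpr ENNReal.ofReal_ne_top)
    (ENNReal.inv_ne_top.mpr (ENNReal.ofReal_pos.mpr Real.pi_pos).ne')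

section ChangeOfVariables

variable {E : Type*} [NormedAddCommGroup E] [NormedSpace ℝ E] {μ : Measure ℂ} [μ.IsAddHaarMeasure]
  {φ φ' : ℂ → ℂ} {s : Set ℂ}

lemma abs_det_restrictScalars_toSpanSingleton (c : ℂ) :
    |((ContinuousLinearMap.toSpanSingleton ℂ c).restrictScalars ℝ).det| = ‖c‖ ^ 2 := by
  simp [ContinuousLinearMap.det, LinearMap.det_restrictScalars, Algebra.norm_complex_eq,
    normSq_eq_norm_sq]

theorem integrableOn_image_iff_integrableOn_norm_deriv_sq_smul (hs : MeasurableSet s)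
    (hφ : ∀ z ∈ s, HasDerivWithinAt φ (φ' z) s z) (hinj : InjOn φ s) (G : ℂ → E) :
    IntegrableOn G (φ '' s) μ ↔ IntegrableOn (fun z => ‖φ' z‖ ^ 2 • G (φ z)) s μ := by
  simpa only [abs_det_restrictScalars_toSpanSingleton] using
    integrableOn_image_iff_integrableOn_abs_det_fderiv_smul μ hs
      (fun z hz => (hφ z hz).hasFDerivWithinAt.restrictScalars ℝ) hinj G

theorem setIntegral_image_eq_setIntegral_norm_deriv_sq_smul (hs : MeasurableSet s)
    (hφ : ∀ z ∈ s, HasDerivWithinAt φ (φ' z) s z) (hinj : InjOn φ s) (G : ℂ → E) :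
    ∫ w in φ '' s, G w ∂μ = ∫ z in s, ‖φ' z‖ ^ 2 • G (φ z) ∂μ := by
  simpa only [abs_det_restrictScalars_toSpanSingleton] using
    integral_image_eq_integral_abs_det_fderiv_smul μ hs
      (fun z hz => (hφ z hz).hasFDerivWithinAt.restrictScalars ℝ) hinj G

end ChangeOfVariables

section Besov

variable {p : ℝ} {f g φ : ℂ → ℂ} {z : ℂ}

lemma besovIntegrand_nonneg (hz : z ∈ unitDisk) : 0 ≤ besovIntegrand p f z :=
  mul_nonneg (by positivity) (Real.rpow_nonneg (one_sub_norm_sq_pos hz).le _)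

lemma continuousOn_one_sub_norm_sq_rpow (q : ℝ) :
    ContinuousOn (fun z : ℂ => (1 - ‖z‖ ^ 2) ^ q) unitDisk :=
  (continuous_const.sub (continuous_norm.pow 2)).continuousOn.rpow_const
    fun _ hz => Or.inl (one_sub_norm_sq_pos hz).ne'

lemma continuousOn_besovIntegrand (hp : 0 ≤ p) (hf : DifferentiableOn ℂ f unitDisk) :
    ContinuousOn (besovIntegrand p f) unitDisk :=
  ((hf.analyticOnNhd isOpen_unitDisk).deriv.continuousOn.norm.rpow_const fun _ _ => Or.inr hp).mul
    (continuousOn_one_sub_norm_sq_rpow _)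

lemma besovIntegrand_id : besovIntegrand p (fun w => w) = fun z => (1 - ‖z‖ ^ 2) ^ (p - 2) := by
  ext z
  simp [besovIntegrand]

lemma besovIntegrand_sub_const (c : ℂ) :
    besovIntegrand p (fun z => f z - c) = besovIntegrand p f := by
  ext z
  simp [besovIntegrand, deriv_sub_const]

lemma memBesov_sub_const (hf : MemBesov p f) (c : ℂ) : MemBesov p (fun z => f z - c) :=
  ⟨hf.1.sub_const c, by rw [besovIntegrand_sub_const]; exact hf.2⟩

lemma besovNorm_sub_const (f : ℂ → ℂ) (c : ℂ) :
    besovNorm p (fun z => f z - c) = ‖f 0 - c‖ + besovSemi p f := by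
  rw [besovNorm, besovSemi, besovSemi, besovIntegrand_sub_const]

lemma besovIntegrand_comp (hf : DifferentiableAt ℂ f (φ z)) (hφ : DifferentiableAt ℂ φ z) :
    besovIntegrand p (f ∘ φ) z = ‖deriv f (φ z)‖ ^ p * besovIntegrand p φ z := by
  rw [besovIntegrand, besovIntegrand, deriv_comp z hf hφ, norm_mul,
    Real.mul_rpow (norm_nonneg _) (norm_nonneg _), mul_assoc]

/-- `p ≠ 0` is needed where `f' z = 0`, because `0 ^ 0 = 1`. -/
lemma besovIntegrand_eq_sq_mul (hp : p ≠ 0) (hz : z ∈ unitDisk) :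
    besovIntegrand p f z = ‖deriv f z‖ ^ 2 * (‖deriv f z‖ * (1 - ‖z‖ ^ 2)) ^ (p - 2) := by
  have ha := norm_nonneg (deriv f z)
  have hsplit : ‖deriv f z‖ ^ p = ‖deriv f z‖ ^ 2 * ‖deriv f z‖ ^ (p - 2) := by
    rw [← Real.rpow_natCast, ← Real.rpow_add' ha (by simpa using hp)]
    norm_num
  rw [besovIntegrand, hsplit, Real.mul_rpow ha (one_sub_norm_sq_pos hz).le, mul_assoc]

lemma besovIntegrand_congr (h : EqOn f g unitDisk) :
    EqOn (besovIntegrand p f) (besovIntegrand p g) unitDisk := fun z hz => by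
  rw [besovIntegrand, besovIntegrand,
    (eventuallyEq_of_mem (isOpen_unitDisk.mem_nhds hz) h).deriv_eq]

lemma memBesov_congr (h : EqOn f g unitDisk) : MemBesov p f ↔ MemBesov p g :=
  and_congr (differentiableOn_congr h)
    (integrableOn_congr_fun (besovIntegrand_congr h) measurableSet_unitDisk)

lemma besovNorm_congr (h : EqOn f g unitDisk) : besovNorm p f = besovNorm p g := by
  rw [besovNorm, besovNorm, besovSemi, besovSemi, h zero_mem_unitDisk,
    setIntegral_congr_fun measurableSet_unitDisk (besovIntegrand_congr h)]

lemma memBesov_of_norm_deriv_le_one (hp : 2 ≤ p) (hf : DifferentiableOn ℂ f unitDisk)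
    (hf' : ∀ z ∈ unitDisk, ‖deriv f z‖ ≤ 1) : MemBesov p f := by
  have hp0 : 0 ≤ p := by linarith
  refine ⟨hf, .of_bound measure_ball_lt_top
    ((continuousOn_besovIntegrand hp0 hf).aestronglyMeasurable measurableSet_unitDisk) 1 ?_⟩
  filter_upwards [ae_restrict_mem measurableSet_unitDisk] with z hz
  rw [Real.norm_of_nonneg (besovIntegrand_nonneg hz)]
  exact mul_le_one₀ (Real.rpow_le_one (norm_nonneg _) (hf' z hz) (by linarith))
    (Real.rpow_nonneg (one_sub_norm_sq_pos hz).le _)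
    (Real.rpow_le_one (one_sub_norm_sq_pos hz).le (by linarith [sq_nonneg ‖z‖]) (by linarith))

end Besov

section Moments

variable {α : Type*} [MeasurableSpace α] {μ : Measure α} {u v W V : α → ℝ}

lemma integrable_comp_mul_of_mem_Icc {g : ℝ → ℝ} (hg : Continuous g)
    (hu : AEStronglyMeasurable u μ) (hu01 : ∀ᵐ x ∂μ, u x ∈ Icc (0 : ℝ) 1) (hW : Integrable W μ) :
    Integrable (fun x => g (u x) * W x) μ := by
  obtain ⟨C, hC⟩ := isCompact_Icc.exists_bound_of_continuousOn hg.continuousOn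
  exact hW.bdd_mul (hg.comp_aestronglyMeasurable hu) (hu01.mono fun x hx => hC _ hx)

lemma abs_integral_comp_mul_sub_le {g h : ℝ → ℝ} (hg : Continuous g) (hh : Continuous h)
    (hu : AEStronglyMeasurable u μ) (hu01 : ∀ᵐ x ∂μ, u x ∈ Icc (0 : ℝ) 1) (hW : Integrable W μ)
    {ε : ℝ} (hgh : ∀ t ∈ Icc (0 : ℝ) 1, |g t - h t| ≤ ε) :
    |∫ x, g (u x) * W x ∂μ - ∫ x, h (u x) * W x ∂μ| ≤ ε * ∫ x, |W x| ∂μ := by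
  have hgi := integrable_comp_mul_of_mem_Icc hg hu hu01 hW
  have hhi := integrable_comp_mul_of_mem_Icc hh hu hu01 hW
  rw [← integral_sub hgi hhi, ← integral_const_mul]
  refine abs_integral_le_integral_abs.trans
    (integral_mono_ae (hgi.sub hhi).abs (hW.abs.const_mul ε) ?_)
  filter_upwards [hu01] with x hx
  rw [← sub_mul, abs_mul]
  exact mul_le_mul_of_nonneg_right (hgh _ hx) (abs_nonneg _)

lemma integral_eval_mul_eq_of_forall_pow_eq
    (hu : AEStronglyMeasurable u μ) (hu01 : ∀ᵐ x ∂μ, u x ∈ Icc (0 : ℝ) 1)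
    (hv : AEStronglyMeasurable v μ) (hv01 : ∀ᵐ x ∂μ, v x ∈ Icc (0 : ℝ) 1)
    (hW : Integrable W μ) (hV : Integrable V μ)
    (hmom : ∀ n : ℕ, ∫ x, u x ^ n * W x ∂μ = ∫ x, v x ^ n * V x ∂μ) (P : Polynomial ℝ) :
    ∫ x, P.eval (u x) * W x ∂μ = ∫ x, P.eval (v x) * V x ∂μ := by
  induction P using Polynomial.induction_on' with
  | add P Q hP hQ =>
    simp only [Polynomial.eval_add, add_mul]
    rw [integral_add (integrable_comp_mul_of_mem_Icc P.continuous hu hu01 hW)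
        (integrable_comp_mul_of_mem_Icc Q.continuous hu hu01 hW),
      integral_add (integrable_comp_mul_of_mem_Icc P.continuous hv hv01 hV)
        (integrable_comp_mul_of_mem_Icc Q.continuous hv hv01 hV), hP, hQ]
  | monomial n a =>
    simp only [Polynomial.eval_monomial, mul_assoc]
    rw [integral_const_mul, integral_const_mul, hmom]

theorem integral_comp_mul_eq_of_forall_pow_eq
    (hu : AEStronglyMeasurable u μ) (hu01 : ∀ᵐ x ∂μ, u x ∈ Icc (0 : ℝ) 1)
    (hv : AEStronglyMeasurable v μ) (hv01 : ∀ᵐ x ∂μ, v x ∈ Icc (0 : ℝ) 1)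
    (hW : Integrable W μ) (hV : Integrable V μ)
    (hmom : ∀ n : ℕ, ∫ x, u x ^ n * W x ∂μ = ∫ x, v x ^ n * V x ∂μ)
    {g : ℝ → ℝ} (hg : Continuous g) :
    ∫ x, g (u x) * W x ∂μ = ∫ x, g (v x) * V x ∂μ := by
  refine eq_of_forall_dist_le fun ε hε => ?_
  set C := ∫ x, |W x| ∂μ + ∫ x, |V x| ∂μ + 1
  have hC : 0 < C := by positivity
  obtain ⟨P, hP⟩ := exists_polynomial_near_of_continuousOn 0 1 g hg.continuousOn (ε / C)
    (div_pos hε hC)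
  have hgP : ∀ t ∈ Icc (0 : ℝ) 1, |g t - P.eval t| ≤ ε / C := fun t ht =>
    (abs_sub_comm _ _).trans_le (hP t ht).le
  have hWP := abs_integral_comp_mul_sub_le hg P.continuous hu hu01 hW hgP
  have hVP := abs_integral_comp_mul_sub_le hg P.continuous hv hv01 hV hgP
  rw [integral_eval_mul_eq_of_forall_pow_eq hu hu01 hv hv01 hW hV hmom] at hWP
  rw [Real.dist_eq]
  calc |∫ x, g (u x) * W x ∂μ - ∫ x, g (v x) * V x ∂μ|
      ≤ ε / C * ∫ x, |W x| ∂μ + ε / C * ∫ x, |V x| ∂μ := by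
        have := abs_sub_le (∫ x, g (u x) * W x ∂μ) (∫ x, P.eval (v x) * V x ∂μ)
          (∫ x, g (v x) * V x ∂μ)
        rw [abs_sub_comm (∫ x, P.eval (v x) * V x ∂μ)] at this
        linarith
    _ ≤ ε := by
        rw [← mul_add, div_mul_eq_mul_div, div_le_iff₀ hC]
        exact mul_le_mul_of_nonneg_left (by linarith) hε.le

end Moments

lemma integrableOn_comp_norm_rpow_mul {p : ℝ} (hp : 0 ≤ p) {ψ : ℂ → ℂ}
    (hψ : ContinuousOn ψ unitDisk) (hψD : MapsTo ψ unitDisk unitDisk) {g : ℝ → ℝ}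
    (hg : Continuous g) {W : ℂ → ℝ} (hW : IntegrableOn W unitDisk dA) :
    IntegrableOn (fun z => g (‖ψ z‖ ^ p) * W z) unitDisk dA :=
  integrable_comp_mul_of_mem_Icc hg
    ((hψ.norm.rpow_const fun _ _ => Or.inr hp).aestronglyMeasurable measurableSet_unitDisk)
    (ae_restrict_of_forall_mem measurableSet_unitDisk fun _ hz => norm_rpow_mem_Icc hp (hψD hz)) hW

lemma hasDerivAt_pow_succ_div (n : ℕ) (z : ℂ) :
    HasDerivAt (fun w : ℂ => w ^ (n + 1) / (n + 1)) (z ^ n) z := by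
  refine ((hasDerivAt_pow (n + 1) z).div_const ((n : ℂ) + 1)).congr_deriv ?_
  rw [Nat.add_sub_cancel, Nat.cast_succ, mul_div_cancel_left₀ _ (Nat.cast_add_one_ne_zero n)]

lemma deriv_pow_succ_div (n : ℕ) : deriv (fun w : ℂ => w ^ (n + 1) / (n + 1)) = fun z => z ^ n :=
  funext fun z => (hasDerivAt_pow_succ_div n z).deriv

section Isometry

variable {p : ℝ} {φ : ℂ → ℂ}

lemma memBesov_id (hp : 2 ≤ p) : MemBesov p (fun z => z) :=
  memBesov_of_norm_deriv_le_one hp differentiable_id.differentiableOn fun z _ => by simp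

lemma memBesov_pow_succ_div (hp : 2 ≤ p) (n : ℕ) :
    MemBesov p (fun z : ℂ => z ^ (n + 1) / (n + 1)) :=
  memBesov_of_norm_deriv_le_one hp
    (fun z _ => (hasDerivAt_pow_succ_div n z).differentiableAt.differentiableWithinAt)
    fun z hz => by
      rw [deriv_pow_succ_div, norm_pow]
      exact pow_le_one₀ (norm_nonneg z) (mem_unitDisk.mp hz).le

lemma IsBesovIsometry.map_zero (hp : 2 ≤ p) (h : IsBesovIsometry p φ) : φ 0 = 0 := by
  have hid := (h _ (memBesov_id hp)).2
  have hsub := (h _ (memBesov_sub_const (memBesov_id hp) (φ 0))).2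
  rw [besovNorm_sub_const (fun z => z)] at hsub
  rw [show ((fun z => z - φ 0) ∘ φ) = fun z => φ z - φ 0 from rfl, besovNorm_sub_const] at hsub
  rw [show ((fun z : ℂ => z) ∘ φ) = φ from rfl, besovNorm, besovNorm] at hid
  simp only [sub_self, norm_zero, zero_sub, norm_neg, zero_add] at hid hsub
  exact norm_eq_zero.mp (by linarith [norm_nonneg (φ 0)])

lemma IsBesovIsometry.integrableOn_besovIntegrand (hp : 2 ≤ p) (h : IsBesovIsometry p φ) :
    IntegrableOn (besovIntegrand p φ) unitDisk dA :=
  (h _ (memBesov_id hp)).1.2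

lemma IsBesovIsometry.setIntegral_besovIntegrand_comp (hp : p ≠ 0) (h : IsBesovIsometry p φ)
    (hφ0 : φ 0 = 0) {f : ℂ → ℂ} (hf : MemBesov p f) :
    ∫ z in unitDisk, besovIntegrand p (f ∘ φ) z ∂dA
      = ∫ z in unitDisk, besovIntegrand p f z ∂dA := by
  have hnorm := (h f hf).2
  rw [besovNorm, besovNorm, Function.comp_apply, hφ0, add_right_inj, besovSemi, besovSemi] at hnorm
  exact (Real.rpow_left_inj
    (setIntegral_nonneg measurableSet_unitDisk fun _ hz => besovIntegrand_nonneg hz)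
    (setIntegral_nonneg measurableSet_unitDisk fun _ hz => besovIntegrand_nonneg hz)
    (one_div_ne_zero hp)).mp hnorm

lemma IsBesovIsometry.setIntegral_pow_mul_besovIntegrand (hp : 2 ≤ p) (hφ : IsAnalyticSelfMap φ)
    (h : IsBesovIsometry p φ) (n : ℕ) :
    ∫ z in unitDisk, (‖φ z‖ ^ p) ^ n * besovIntegrand p φ z ∂dA
      = ∫ z in unitDisk, (‖z‖ ^ p) ^ n * (1 - ‖z‖ ^ 2) ^ (p - 2) ∂dA := by
  have key := h.setIntegral_besovIntegrand_comp (by linarith) (h.map_zero hp)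
    (memBesov_pow_succ_div hp n)
  rw [setIntegral_congr_fun measurableSet_unitDisk fun z hz =>
    besovIntegrand_comp (hasDerivAt_pow_succ_div n (φ z)).differentiableAt
      (hφ.1.differentiableAt (isOpen_unitDisk.mem_nhds hz))] at key
  simpa only [besovIntegrand, deriv_pow_succ_div, norm_pow,
    ← Real.rpow_pow_comm (norm_nonneg _), mul_assoc] using key

theorem IsBesovIsometry.setIntegral_comp_mul_besovIntegrand (hp : 2 ≤ p)
    (hφ : IsAnalyticSelfMap φ) (h : IsBesovIsometry p φ) {g : ℝ → ℝ} (hg : Continuous g) :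
    ∫ z in unitDisk, g (‖φ z‖ ^ p) * besovIntegrand p φ z ∂dA
      = ∫ z in unitDisk, g (‖z‖ ^ p) * (1 - ‖z‖ ^ 2) ^ (p - 2) ∂dA := by
  have hp0 : 0 ≤ p := by linarith
  refine integral_comp_mul_eq_of_forall_pow_eq
    ((hφ.1.continuousOn.norm.rpow_const fun _ _ => Or.inr hp0).aestronglyMeasurable
      measurableSet_unitDisk)
    (ae_restrict_of_forall_mem measurableSet_unitDisk fun z hz => norm_rpow_mem_Icc hp0 (hφ.2 hz))
    ((continuous_norm.rpow_const fun _ => Or.inr hp0).aestronglyMeasurable)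
    (ae_restrict_of_forall_mem measurableSet_unitDisk fun z hz => norm_rpow_mem_Icc hp0 hz)
    (h.integrableOn_besovIntegrand hp) ?_ (h.setIntegral_pow_mul_besovIntegrand hp hφ) hg
  have hV := (memBesov_id hp).2
  rwa [besovIntegrand_id] at hV

end Isometry

theorem injOn_of_ae_existsUnique_preimage {U V : Set ℂ} {φ : ℂ → ℂ} (hφ : AnalyticOnNhd ℂ φ U)
    (hU : IsOpen U) (hUc : IsPreconnected U) (hV : IsOpen V) (hVne : V.Nonempty)
    (hae : ∀ᵐ w, w ∈ V → ∃! z, z ∈ U ∧ φ z = w) : InjOn φ (U ∩ φ ⁻¹' V) := by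
  have hnull : ∀ O : Set ℂ, (∀ w ∈ O, w ∈ V ∧ ¬∃! z, z ∈ U ∧ φ z = w) → volume O = 0 :=
    fun O hO => measure_eq_zero_iff_ae_notMem.mpr
      (hae.mono fun w hw hwO => (hO w hwO).2 (hw (hO w hwO).1))
  rcases hφ.is_constant_or_isOpen hUc with ⟨w₀, hw₀⟩ | hopen
  · refine absurd (hnull (V \ {w₀}) fun w hw =>
      ⟨hw.1, fun ⟨z, ⟨hz, hzw⟩, _⟩ => hw.2 (hzw ▸ hw₀ z hz)⟩) ?_
    rw [measure_sdiff_null (measure_singleton w₀)]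
    exact (hV.measure_pos volume hVne).ne'
  · intro z₁ hz₁ z₂ hz₂ heq
    by_contra hne
    obtain ⟨B₁, B₂, hB₁, hB₂, hz₁B, hz₂B, hdisj⟩ := t2_separation hne
    have hW : IsOpen (U ∩ φ ⁻¹' V) := hφ.continuousOn.isOpen_inter_preimage hU hV
    -- every point of `O` has a preimage in `B₁` and another one in `B₂`
    set O := φ '' (B₁ ∩ (U ∩ φ ⁻¹' V)) ∩ φ '' (B₂ ∩ (U ∩ φ ⁻¹' V))
    have hO : IsOpen O :=
      (hopen _ (inter_subset_right.trans inter_subset_left) (hB₁.inter hW)).inter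
        (hopen _ (inter_subset_right.trans inter_subset_left) (hB₂.inter hW))
    refine (hO.measure_pos volume ⟨φ z₁, ⟨z₁, ⟨hz₁B, hz₁⟩, rfl⟩, ⟨z₂, ⟨hz₂B, hz₂⟩, heq.symm⟩⟩).ne'
      (hnull O ?_)
    rintro w ⟨⟨a, ⟨ha, haU, haV⟩, rfl⟩, ⟨b, ⟨hb, hbU, -⟩, hba⟩⟩
    exact ⟨haV, fun ⟨_, _, huniq⟩ =>
      hdisj.ne_of_mem ha hb ((huniq a ⟨haU, rfl⟩).trans (huniq b ⟨hbU, hba⟩).symm)⟩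

theorem eqOn_of_le_of_setIntegral_le {X : Type*} [TopologicalSpace X] [MeasurableSpace X]
    [OpensMeasurableSpace X] {μ : Measure X} [μ.IsOpenPosMeasure] {U : Set X} {F H : X → ℝ}
    (hU : IsOpen U) (hF : ContinuousOn F U) (hH : ContinuousOn H U) (hFi : IntegrableOn F U μ)
    (hHi : IntegrableOn H U μ) (hle : ∀ x ∈ U, F x ≤ H x)
    (hint : ∫ x in U, H x ∂μ ≤ ∫ x in U, F x ∂μ) : EqOn F H U := by
  have hnonneg : ∀ x ∈ U, 0 ≤ H x - F x := fun x hx => sub_nonneg.mpr (hle x hx)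
  have hzero : ∫ x in U, (H x - F x) ∂μ = 0 :=
    le_antisymm (by rw [integral_sub hHi hFi]; linarith)
      (setIntegral_nonneg hU.measurableSet hnonneg)
  have hae : (fun x => H x - F x) =ᵐ[μ.restrict U] 0 :=
    (integral_eq_zero_iff_of_nonneg_ae (ae_restrict_of_forall_mem hU.measurableSet hnonneg)
      (hHi.sub hFi)).mp hzero
  exact fun x hx =>
    (sub_eq_zero.mp (Measure.eqOn_open_of_ae_eq hae hU (hH.sub hF) continuousOn_const hx)).symm

lemma frequently_deriv_ne_zero_of_injOn {U : Set ℂ} {φ : ℂ → ℂ} {z₀ : ℂ}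
    (hd : DifferentiableOn ℂ φ U) (hU : U ∈ 𝓝 z₀) (hinj : InjOn φ U) :
    ∃ᶠ z in 𝓝 z₀, deriv φ z ≠ 0 := by
  intro hzero
  obtain ⟨ε, hε, hball⟩ := Metric.eventually_nhds_iff_ball.mp (hzero.and hU)
  have hz : z₀ + (ε / 2 : ℝ) ∈ ball z₀ ε := by
    rw [mem_ball, dist_self_add_left, norm_real, Real.norm_of_nonneg (by linarith)]
    linarith
  have hconst := isOpen_ball.is_const_of_deriv_eq_zero (convex_ball z₀ ε).isPreconnected
    (hd.mono fun z hz => (hball z hz).2) (fun z hz => not_not.mp (hball z hz).1)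
    (mem_ball_self hε) hz
  have := hinj (hball _ (mem_ball_self hε)).2 (hball _ hz).2 hconst
  simp only [left_eq_add, ofReal_eq_zero] at this
  linarith

section SelfMap

variable {p : ℝ} {φ : ℂ → ℂ}

lemma besovIntegrand_le_of_isAnalyticSelfMap (hp : 2 ≤ p) (hφ : IsAnalyticSelfMap φ) {z : ℂ}
    (hz : z ∈ unitDisk) :
    besovIntegrand p φ z ≤ ‖deriv φ z‖ ^ 2 * (1 - ‖φ z‖ ^ 2) ^ (p - 2) := by
  rw [besovIntegrand_eq_sq_mul (by linarith) hz]
  exact mul_le_mul_of_nonneg_left (Real.rpow_le_rpow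
    (mul_nonneg (norm_nonneg _) (one_sub_norm_sq_pos hz).le)
    (norm_deriv_mul_le_of_mapsTo_unitDisk hφ.1 hφ.2 hz) (by linarith)) (by positivity)

variable {U : Set ℂ} {G : ℂ → ℝ}

lemma IsAnalyticSelfMap.hasDerivWithinAt (hφ : IsAnalyticSelfMap φ) (hUD : U ⊆ unitDisk) :
    ∀ z ∈ U, HasDerivWithinAt φ (deriv φ z) U z := fun _ hz =>
  (hφ.1.differentiableAt (isOpen_unitDisk.mem_nhds (hUD hz))).hasDerivAt.hasDerivWithinAt

lemma integrableOn_norm_deriv_sq_mul_comp (hφ : IsAnalyticSelfMap φ) (hU : MeasurableSet U)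
    (hUD : U ⊆ unitDisk) (hinj : InjOn φ U) (hG : IntegrableOn G unitDisk dA) :
    IntegrableOn (fun z => ‖deriv φ z‖ ^ 2 * G (φ z)) U dA :=
  (integrableOn_image_iff_integrableOn_norm_deriv_sq_smul hU
    (hφ.hasDerivWithinAt hUD) hinj G).mp
    (hG.mono_set (hφ.2.mono_left hUD).image_subset)

lemma setIntegral_norm_deriv_sq_mul_comp_le (hφ : IsAnalyticSelfMap φ) (hU : MeasurableSet U)
    (hUD : U ⊆ unitDisk) (hinj : InjOn φ U) (hG : IntegrableOn G unitDisk dA)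
    (hG0 : ∀ w ∈ unitDisk, 0 ≤ G w) :
    ∫ z in U, ‖deriv φ z‖ ^ 2 * G (φ z) ∂dA ≤ ∫ w in unitDisk, G w ∂dA := by
  have hcov := setIntegral_image_eq_setIntegral_norm_deriv_sq_smul (μ := dA) hU
    (hφ.hasDerivWithinAt hUD) hinj G
  simp only [smul_eq_mul] at hcov
  rw [← hcov]
  exact setIntegral_mono_set hG (ae_restrict_of_forall_mem measurableSet_unitDisk hG0)
    (hφ.2.mono_left hUD).image_subset.eventuallyLE

end SelfMap

section Rigidity

variable {p : ℝ} {φ : ℂ → ℂ}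

/-- Pointwise, `≤` is Schwarz–Pick; integrated, the change of variables `w = φ z` on `U` and the
isometry identity give `≥`. -/
theorem IsBesovIsometry.eqOn_comp_mul_besovIntegrand (hp : 2 ≤ p) (hφ : IsAnalyticSelfMap φ)
    (h : IsBesovIsometry p φ) {U : Set ℂ} (hU : IsOpen U) (hUD : U ⊆ unitDisk) (hinj : InjOn φ U)
    {g : ℝ → ℝ} (hg : Continuous g) (hg0 : ∀ t, 0 ≤ g t)
    (hgU : ∀ z ∈ unitDisk \ U, g (‖φ z‖ ^ p) = 0) :
    EqOn (fun z => g (‖φ z‖ ^ p) * besovIntegrand p φ z)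
      (fun z => ‖deriv φ z‖ ^ 2 * (g (‖φ z‖ ^ p) * (1 - ‖φ z‖ ^ 2) ^ (p - 2))) U := by
  have hp0 : 0 ≤ p := by linarith
  set G : ℂ → ℝ := fun w => g (‖w‖ ^ p) * (1 - ‖w‖ ^ 2) ^ (p - 2)
  have hGc : ContinuousOn G unitDisk :=
    (hg.comp_continuousOn (continuous_norm.rpow_const fun _ => Or.inr hp0).continuousOn).mul
      (continuousOn_one_sub_norm_sq_rpow _)
  have hGi : IntegrableOn G unitDisk dA := by
    have hV := (memBesov_id hp).2
    rw [besovIntegrand_id] at hV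
    exact integrableOn_comp_norm_rpow_mul hp0 continuousOn_id (mapsTo_id _) hg hV
  refine eqOn_of_le_of_setIntegral_le hU
    ((hg.comp_continuousOn (hφ.1.continuousOn.norm.rpow_const fun _ _ => Or.inr hp0)).mul
      (continuousOn_besovIntegrand hp0 hφ.1) |>.mono hUD)
    (((hφ.1.analyticOnNhd isOpen_unitDisk).deriv.continuousOn.norm.pow 2).mul
      (hGc.comp hφ.1.continuousOn hφ.2) |>.mono hUD)
    ((integrableOn_comp_norm_rpow_mul hp0 hφ.1.continuousOn hφ.2 hg
      (h.integrableOn_besovIntegrand hp)).mono_set hUD)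
    (integrableOn_norm_deriv_sq_mul_comp hφ hU.measurableSet hUD hinj hGi)
    (fun z hz => ?_) ?_
  · rw [mul_left_comm]
    exact mul_le_mul_of_nonneg_left (besovIntegrand_le_of_isAnalyticSelfMap hp hφ (hUD hz)) (hg0 _)
  · calc ∫ z in U, ‖deriv φ z‖ ^ 2 * G (φ z) ∂dA
        ≤ ∫ w in unitDisk, G w ∂dA :=
          setIntegral_norm_deriv_sq_mul_comp_le hφ hU.measurableSet hUD hinj hGi
            fun w hw => mul_nonneg (hg0 _) (Real.rpow_nonneg (one_sub_norm_sq_pos hw).le _)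
      _ = ∫ z in unitDisk, g (‖φ z‖ ^ p) * besovIntegrand p φ z ∂dA :=
        (h.setIntegral_comp_mul_besovIntegrand hp hφ hg).symm
      _ = ∫ z in U, g (‖φ z‖ ^ p) * besovIntegrand p φ z ∂dA :=
        setIntegral_eq_of_subset_of_forall_sdiff_eq_zero measurableSet_unitDisk hUD
          fun z hz => by simp only [hgU z hz, zero_mul]

theorem IsBesovIsometry.besovIntegrand_eq_of_injOn (hp : 2 ≤ p) (hφ : IsAnalyticSelfMap φ)
    (h : IsBesovIsometry p φ) {r : ℝ} (hr : 0 < r) (hinj : InjOn φ (unitDisk ∩ φ ⁻¹' ball 0 r)) :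
    ∀ z ∈ unitDisk ∩ φ ⁻¹' ball 0 r,
      besovIntegrand p φ z = ‖deriv φ z‖ ^ 2 * (1 - ‖φ z‖ ^ 2) ^ (p - 2) := by
  have hp0 : 0 < p := by linarith
  set g : ℝ → ℝ := fun t => max (r ^ p - t) 0
  have hEq := h.eqOn_comp_mul_besovIntegrand hp hφ
    (hφ.1.continuousOn.isOpen_inter_preimage isOpen_unitDisk isOpen_ball) inter_subset_left hinj
    (g := g) (by fun_prop) (fun _ => le_max_right _ _) fun z hz => max_eq_right
      (sub_nonpos.mpr (Real.rpow_le_rpow hr.le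
        (not_lt.mp fun h => hz.2 ⟨hz.1, mem_ball_zero_iff.mpr h⟩) hp0.le))
  intro z hz
  have hgz : 0 < g (‖φ z‖ ^ p) := lt_max_of_lt_left
    (sub_pos.mpr (Real.rpow_lt_rpow (norm_nonneg _) (mem_ball_zero_iff.mp hz.2) hp0))
  have hz' : g (‖φ z‖ ^ p) * besovIntegrand p φ z
      = g (‖φ z‖ ^ p) * (‖deriv φ z‖ ^ 2 * (1 - ‖φ z‖ ^ 2) ^ (p - 2)) := by
    rw [← mul_left_comm]
    exact hEq hz
  exact mul_left_cancel₀ hgz.ne' hz'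

theorem IsBesovIsometry.norm_deriv_zero_eq_one (hp : 2 < p) (hφ : IsAnalyticSelfMap φ)
    (h : IsBesovIsometry p φ)
    (hpre : ∃ r > (0 : ℝ), ∀ᵐ w, ‖w‖ < r → ∃! z, z ∈ unitDisk ∧ φ z = w) :
    ‖deriv φ 0‖ = 1 := by
  obtain ⟨r, hr, hae⟩ := hpre
  have hφ0 := h.map_zero hp.le
  have hinj : InjOn φ (unitDisk ∩ φ ⁻¹' ball 0 r) :=
    injOn_of_ae_existsUnique_preimage (hφ.1.analyticOnNhd isOpen_unitDisk) isOpen_unitDisk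
      (convex_ball 0 1).isPreconnected isOpen_ball ⟨0, mem_ball_self hr⟩
      (hae.mono fun w hw hwV => hw (mem_ball_zero_iff.mp hwV))
  have hU : unitDisk ∩ φ ⁻¹' ball 0 r ∈ 𝓝 0 :=
    (hφ.1.continuousOn.isOpen_inter_preimage isOpen_unitDisk isOpen_ball).mem_nhds
      ⟨zero_mem_unitDisk, by simpa [hφ0] using hr⟩
  -- Equality in Schwarz–Pick holds wherever `φ' ≠ 0`, at points arbitrarily close to `0` by
  -- injectivity; at `0` it would read `‖φ' 0‖ = 1`.
  by_contra hne
  have hcont : ContinuousAt (fun z => ‖deriv φ z‖ * (1 - ‖z‖ ^ 2) - (1 - ‖φ z‖ ^ 2)) 0 := by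
    have h1 := ((hφ.1.analyticOnNhd isOpen_unitDisk).deriv 0 zero_mem_unitDisk).continuousAt
    have h2 := (hφ.1.differentiableAt (isOpen_unitDisk.mem_nhds zero_mem_unitDisk)).continuousAt
    fun_prop
  have hD := hcont.eventually_ne (y := 0) (by simpa [hφ0, sub_eq_zero] using hne)
  obtain ⟨z, hz0, hzD, hzU⟩ :=
    ((frequently_deriv_ne_zero_of_injOn (hφ.1.mono inter_subset_left) hU hinj).and_eventually
      (hD.and hU)).exists
  have hz := h.besovIntegrand_eq_of_injOn hp.le hφ hr hinj z hzU
  rw [besovIntegrand_eq_sq_mul (by linarith) hzU.1,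
    mul_right_inj' (pow_ne_zero 2 (norm_ne_zero_iff.mpr hz0)),
    Real.rpow_left_inj (mul_nonneg (norm_nonneg _) (one_sub_norm_sq_pos hzU.1).le)
      (one_sub_norm_sq_pos (hφ.2 hzU.1)).le (by linarith)] at hz
  exact hzD (sub_eq_zero.mpr hz)

end Rigidity

theorem isRotation_of_norm_deriv_zero_eq_one {φ : ℂ → ℂ} (hφ : IsAnalyticSelfMap φ)
    (hφ0 : φ 0 = 0) (h1 : ‖deriv φ 0‖ = 1) : IsRotation φ := by
  obtain ⟨c, hc, hφc⟩ := affine_of_mapsTo_ball_of_exists_norm_dslope_eq_div' hφ.1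
    (by rw [hφ0]; exact hφ.2.mono_right ball_subset_closedBall)
    ⟨0, mem_ball_self one_pos, by rwa [dslope_same, div_one]⟩
  exact ⟨c, by rwa [div_one] at hc, fun z hz => by simpa [hφ0, mul_comm] using hφc hz⟩

section Rotation

variable {p : ℝ} {c : ℂ}

lemma isBesovIsometry_congr {φ ψ : ℂ → ℂ} (h : EqOn φ ψ unitDisk) :
    IsBesovIsometry p φ ↔ IsBesovIsometry p ψ := by
  have hcomp : ∀ f : ℂ → ℂ, EqOn (f ∘ φ) (f ∘ ψ) unitDisk := fun f _ hz => congrArg f (h hz)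
  exact forall_congr' fun f => imp_congr_right fun _ =>
    and_congr (memBesov_congr (hcomp f)) (by rw [besovNorm_congr (hcomp f)])

lemma image_mul_left_unitDisk (hc : ‖c‖ = 1) : (c * ·) '' unitDisk = unitDisk := by
  have hc0 : c ≠ 0 := norm_ne_zero_iff.mp (by rw [hc]; exact one_ne_zero)
  ext w
  simp only [mem_image, mem_unitDisk]
  refine ⟨fun ⟨z, hz, hzw⟩ => by rwa [← hzw, norm_mul, hc, one_mul], fun hw => ?_⟩
  exact ⟨c⁻¹ * w, by rwa [norm_mul, norm_inv, hc, inv_one, one_mul], mul_inv_cancel_left₀ hc0 w⟩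

lemma besovIntegrand_comp_mul_left (hc : ‖c‖ = 1) {f : ℂ → ℂ}
    (hf : DifferentiableOn ℂ f unitDisk) {z : ℂ} (hz : z ∈ unitDisk) :
    besovIntegrand p (f ∘ (c * ·)) z = ‖c‖ ^ 2 * besovIntegrand p f (c * z) := by
  have hcz : c * z ∈ unitDisk := image_mul_left_unitDisk hc ▸ mem_image_of_mem _ hz
  rw [besovIntegrand_comp (hf.differentiableAt (isOpen_unitDisk.mem_nhds hcz))
    ((differentiable_id.const_mul c) z)]
  simp [besovIntegrand, hc]

theorem isBesovIsometry_mul_left (hc : ‖c‖ = 1) : IsBesovIsometry p (c * ·) := by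
  intro f hf
  have hderiv : ∀ z ∈ unitDisk, HasDerivWithinAt (c * ·) c unitDisk z := fun z _ => by
    simpa using ((hasDerivAt_id z).const_mul c).hasDerivWithinAt
  have hinj : InjOn (c * ·) unitDisk := fun a _ b _ hab =>
    mul_left_cancel₀ (norm_ne_zero_iff.mp (by rw [hc]; exact one_ne_zero)) hab
  have hint := (integrableOn_image_iff_integrableOn_norm_deriv_sq_smul measurableSet_unitDisk
    hderiv hinj (besovIntegrand p f)).mp (by rw [image_mul_left_unitDisk hc]; exact hf.2)
  have hcov := setIntegral_image_eq_setIntegral_norm_deriv_sq_smul (μ := dA)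
    measurableSet_unitDisk hderiv hinj (besovIntegrand p f)
  simp only [smul_eq_mul, image_mul_left_unitDisk hc] at hint hcov
  have hcomp : EqOn (besovIntegrand p (f ∘ (c * ·))) (fun z => ‖c‖ ^ 2 * besovIntegrand p f (c * z))
      unitDisk := fun z hz => besovIntegrand_comp_mul_left hc hf.1 hz
  refine ⟨⟨hf.1.comp (differentiable_id.const_mul c).differentiableOn
      fun z hz => image_mul_left_unitDisk hc ▸ mem_image_of_mem _ hz,
    (integrableOn_congr_fun hcomp measurableSet_unitDisk).mpr hint⟩, ?_⟩
  rw [besovNorm, besovNorm, besovSemi, besovSemi,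
    setIntegral_congr_fun measurableSet_unitDisk hcomp, ← hcov]
  simp

theorem IsRotation.isBesovIsometry {φ : ℂ → ℂ} (hφ : IsRotation φ) : IsBesovIsometry p φ := by
  obtain ⟨c, hc, hφc⟩ := hφ
  exact (isBesovIsometry_congr hφc).mpr (isBesovIsometry_mul_left hc)

end Rotation

/-- For p>2, if almost every point in some neighborhood of the
origin has exactly one preimage under φ, then C_φ is an isometry on B_p if and
only if φ is a rotation of the disk. -/
theorem isometry_iff_rotation_of_ae_single_preimage
    (p : ℝ) (hp : 2 < p) (φ : ℂ → ℂ)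
    (hφ : IsAnalyticSelfMap φ)
    (hpre : ∃ r > (0 : ℝ), ∀ᵐ w ∂(volume : Measure ℂ),
      ‖w‖ < r → ∃! z, z ∈ unitDisk ∧ φ z = w) :
    IsBesovIsometry p φ ↔ IsRotation φ :=
  ⟨fun h => isRotation_of_norm_deriv_zero_eq_one hφ (h.map_zero hp.le)
    (h.norm_deriv_zero_eq_one hp hφ hpre), IsRotation.isBesovIsometry⟩
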